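/- The Gelfand-Zeitlin torus action is well defined: let A be an n×n Hermitian matrix whose k-th principal submatrix A^{(k)} has distinct eigenvalues, let t ∈ T(k) be a diagonal unitary k×k matrix, and let U, U' ∈ U(k) be unitary matrices such that both U A^{(k)} U⁻¹ and U' A^{(k)} U'⁻¹ equal the same diagonal matrix with entries the ordered eigenvalues of A^{(k)}. Then U⁻¹ t U = U'⁻¹ t U', so the element t • A := (U⁻¹ t U) A (U⁻¹ t U)⁻¹ is independent of the choice of U. -/

import Mathlib

open Matrix

/-- The `k`-th principal (upper-left `k × k`) submatrix of an `n × n` matrix. -/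
def principalSubmatrix {n : ℕ} (k : ℕ) (hk : k ≤ n) (A : Matrix (Fin n) (Fin n) ℂ) :
    Matrix (Fin k) (Fin k) ℂ :=
  A.submatrix (Fin.castLE hk) (Fin.castLE hk)

/-- The embedding of a `k × k` matrix into `n × n` matrices as the upper-left block,
extended by the identity (the embedding `U(k) ⊂ U(n)`). -/
def embedBlock {n : ℕ} (k : ℕ) (hk : k ≤ n) (M : Matrix (Fin k) (Fin k) ℂ) :
    Matrix (Fin n) (Fin n) ℂ := fun i j =>
  if hi : (i : ℕ) < k then
    if hj : (j : ℕ) < k then M ⟨i, hi⟩ ⟨j, hj⟩ else 0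
  else if i = j then 1 else 0

/-! Two unitaries `U, U'` diagonalizing the same matrix to the same diagonal `D` differ by
`V = U' U⁻¹`, which commutes with `D`. When the entries of `D` are distinct, this forces `V` to be
diagonal, so `V` commutes with the diagonal matrix `t` as well, and then `U⁻¹ t U = U'⁻¹ t U'`. -/

namespace Unitary

variable {R : Type*} [Monoid R] [StarMul R]

theorem commute_mul_star_of_conj_eq {u v a b : R} (hu : u ∈ unitary R) (hv : v ∈ unitary R)
    (hua : u * a * star u = b) (hva : v * a * star v = b) : Commute (v * star u) b := by
  have hub : star u * b = a * star u := by
    rw [← hua, ← mul_assoc, ← mul_assoc, star_mul_self_of_mem hu, one_mul]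
  have hvb : b * v = v * a := by
    rw [← hva, mul_assoc, star_mul_self_of_mem hv, mul_one]
  calc v * star u * b = v * a * star u := by rw [mul_assoc, hub, ← mul_assoc]
    _ = b * (v * star u) := by rw [← mul_assoc, hvb]

theorem star_conj_eq_of_commute_mul_star {u v c : R} (hu : u ∈ unitary R) (hv : v ∈ unitary R)
    (h : Commute (v * star u) c) : star u * c * u = star v * c * v := by
  have hw : v * star u ∈ unitary R := mul_mem hv (star_mem hu)
  have hv_eq : v = v * star u * u := by rw [mul_assoc, star_mul_self_of_mem hu, mul_one]
  calc star u * c * u = star u * (star (v * star u) * c * (v * star u)) * u := by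
        rw [(commute_unitary_iff_star_left_conjugate hw).mp h]
    _ = star v * c * v := by
        conv_rhs => rw [hv_eq]
        simp only [star_mul, star_star, mul_assoc]

end Unitary

namespace Matrix

variable {n α : Type*} [Fintype n] [DecidableEq n] [CommRing α] [NoZeroDivisors α]

theorem apply_eq_zero_of_commute_diagonal {M : Matrix n n α} {d : n → α}
    (h : Commute M (diagonal d)) {i j : n} (hij : d i ≠ d j) : M i j = 0 := by
  have hM : M i j * d j = d i * M i j := by
    simpa only [mul_diagonal, diagonal_mul] using congr_fun (congr_fun h.eq i) j
  have : M i j * (d j - d i) = 0 := by linear_combination hM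
  exact (mul_eq_zero.mp this).resolve_right (sub_ne_zero.mpr hij.symm)

theorem commute_diagonal_of_commute_diagonal_injective {M : Matrix n n α} {d : n → α}
    (hd : Function.Injective d) (h : Commute M (diagonal d)) (e : n → α) :
    Commute M (diagonal e) := by
  ext i j
  simp only [mul_diagonal, diagonal_mul]
  by_cases hij : i = j
  · rw [hij, mul_comm]
  · rw [apply_eq_zero_of_commute_diagonal h (hd.ne hij), zero_mul, mul_zero]

end Matrix

theorem gz_torus_action_well_defined_general (n k : ℕ) (hk : k ≤ n)
    (A : Matrix (Fin n) (Fin n) ℂ)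
    (d : Fin k → ℝ) (hd : StrictMono d)
    (s : Fin k → ℂ)
    (U U' : Matrix (Fin k) (Fin k) ℂ)
    (hU : U ∈ Matrix.unitaryGroup (Fin k) ℂ) (hU' : U' ∈ Matrix.unitaryGroup (Fin k) ℂ)
    (hdiag : U * principalSubmatrix k hk A * Uᴴ = Matrix.diagonal fun i => (d i : ℂ))
    (hdiag' : U' * principalSubmatrix k hk A * U'ᴴ = Matrix.diagonal fun i => (d i : ℂ)) :
    Uᴴ * Matrix.diagonal s * U = U'ᴴ * Matrix.diagonal s * U' ∧
      embedBlock k hk (Uᴴ * Matrix.diagonal s * U) * A *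
          (embedBlock k hk (Uᴴ * Matrix.diagonal s * U))ᴴ =
        embedBlock k hk (U'ᴴ * Matrix.diagonal s * U') * A *
          (embedBlock k hk (U'ᴴ * Matrix.diagonal s * U'))ᴴ := by
  have hD : Commute (U' * Uᴴ) (diagonal fun i => (d i : ℂ)) :=
    Unitary.commute_mul_star_of_conj_eq hU hU' hdiag hdiag'
  have ht : Commute (U' * Uᴴ) (diagonal s) :=
    commute_diagonal_of_commute_diagonal_injective
      (Complex.ofReal_injective.comp hd.injective) hD s
  have key : Uᴴ * diagonal s * U = U'ᴴ * diagonal s * U' :=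
    Unitary.star_conj_eq_of_commute_mul_star hU hU' ht
  exact ⟨key, by rw [key]⟩

/-- **Well-definedness of the Gelfand-Zeitlin torus action**: if `A` is Hermitian with
`A^{(k)}` having distinct eigenvalues, `t ∈ T(k)` is a diagonal unitary, and `U, U'` are
unitaries conjugating `A^{(k)}` to the same diagonal matrix of ordered eigenvalues, then
`U⁻¹ t U = U'⁻¹ t U'`; hence `t • A := (U⁻¹tU) A (U⁻¹tU)⁻¹` does not depend on `U`. -/
theorem gz_torus_action_well_defined (n k : ℕ) (hk : k ≤ n)
    (A : Matrix (Fin n) (Fin n) ℂ) (hA : A.IsHermitian)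
    (d : Fin k → ℝ) (hd : StrictMono d)
    (s : Fin k → ℂ) (hs : ∀ i, star (s i) * s i = 1)
    (U U' : Matrix (Fin k) (Fin k) ℂ)
    (hU : U ∈ Matrix.unitaryGroup (Fin k) ℂ) (hU' : U' ∈ Matrix.unitaryGroup (Fin k) ℂ)
    (hdiag : U * principalSubmatrix k hk A * Uᴴ = Matrix.diagonal fun i => (d i : ℂ))
    (hdiag' : U' * principalSubmatrix k hk A * U'ᴴ = Matrix.diagonal fun i => (d i : ℂ)) :
    Uᴴ * Matrix.diagonal s * U = U'ᴴ * Matrix.diagonal s * U' ∧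
      embedBlock k hk (Uᴴ * Matrix.diagonal s * U) * A *
          (embedBlock k hk (Uᴴ * Matrix.diagonal s * U))ᴴ =
        embedBlock k hk (U'ᴴ * Matrix.diagonal s * U') * A *
          (embedBlock k hk (U'ᴴ * Matrix.diagonal s * U'))ᴴ :=
  gz_torus_action_well_defined_general n k hk A d hd s U U' hU hU' hdiag hdiag'
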